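/- arXiv:1207.0258 — 2 statements merged into one kernel-verified Lean document; each statement's English description precedes it below -/
import Mathlib

section
/- If the maximal weight satisfies w_1 ≤ (1/2) Σ_{k=1}^n w_k, then the Suwa–Todo flow is rejection-free: v_{ii} = 0 for all i. -/
/-
On the diagonal `Δ i i` is `2 w₁ - S_n` for `i = 1` and `w i + w₁` for `i ≥ 2`. In the first case
`Δ ≤ 0` by the hypothesis on the maximal weight; in the second `w i + w i - Δ = w i - w₁ ≤ 0`
by maximality of `w₁`. Either way the minimum inside the flow is nonpositive.
-/

open Finset

/-- Partial sums `S i = w 1 + ... + w i`, with the convention `S 0 = S n`. -/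
noncomputable def stS (n : ℕ) (w : ℕ → ℝ) (i : ℕ) : ℝ :=
  if i = 0 then ∑ k ∈ Finset.Icc 1 n, w k else ∑ k ∈ Finset.Icc 1 i, w k

/-- `Δ i j = S i - S (j-1) + w 1`. -/
noncomputable def stDelta (n : ℕ) (w : ℕ → ℝ) (i j : ℕ) : ℝ :=
  stS n w i - stS n w (j - 1) + w 1

/-- The Suwa–Todo flow
`v i j = max (0, min (Δ i j, w i + w j - Δ i j, w i, w j))`. -/
noncomputable def stFlow (n : ℕ) (w : ℕ → ℝ) (i j : ℕ) : ℝ :=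
  max 0 (min (stDelta n w i j) (min (w i + w j - stDelta n w i j) (min (w i) (w j))))

theorem stS_one (n : ℕ) (w : ℕ → ℝ) : stS n w 1 = w 1 := by
  simp [stS]

theorem stS_succ (n : ℕ) (w : ℕ → ℝ) {i : ℕ} (hi : 1 ≤ i) :
    stS n w (i + 1) = stS n w i + w (i + 1) := by
  simp only [stS, Nat.add_one_ne_zero, if_false, if_neg (by omega : i ≠ 0)]
  exact sum_Icc_succ_top (by omega) w

theorem stDelta_one_one (n : ℕ) (w : ℕ → ℝ) :
    stDelta n w 1 1 = 2 * w 1 - ∑ k ∈ Icc 1 n, w k := by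
  rw [stDelta, stS_one, Nat.sub_self, stS, if_pos rfl]
  ring

theorem stDelta_self_of_two_le (n : ℕ) (w : ℕ → ℝ) {i : ℕ} (hi : 2 ≤ i) :
    stDelta n w i i = w i + w 1 := by
  obtain ⟨k, rfl⟩ : ∃ k, i = k + 1 := ⟨i - 1, by omega⟩
  simp only [stDelta, Nat.add_sub_cancel, stS_succ n w (by omega : 1 ≤ k)]
  ring

theorem stFlow_eq_zero_of_stDelta_nonpos (n : ℕ) (w : ℕ → ℝ) {i j : ℕ}
    (hΔ : stDelta n w i j ≤ 0) : stFlow n w i j = 0 :=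
  max_eq_left ((min_le_left _ _).trans hΔ)

theorem stFlow_eq_zero_of_le_stDelta (n : ℕ) (w : ℕ → ℝ) {i j : ℕ}
    (hΔ : w i + w j ≤ stDelta n w i j) : stFlow n w i j = 0 :=
  max_eq_left (((min_le_right _ _).trans (min_le_left _ _)).trans (by linarith))

theorem suwa_todo_rejection_free_general (n : ℕ) (w : ℕ → ℝ)
    (hmax : ∀ k ∈ Finset.Icc 1 n, w k ≤ w 1)
    (h : w 1 ≤ (∑ k ∈ Finset.Icc 1 n, w k) / 2) :
    ∀ i ∈ Finset.Icc 1 n, stFlow n w i i = 0 := by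
  intro i hi
  rcases (mem_Icc.1 hi).1.eq_or_lt with rfl | hi2
  · apply stFlow_eq_zero_of_stDelta_nonpos
    rw [stDelta_one_one]
    linarith
  · apply stFlow_eq_zero_of_le_stDelta
    rw [stDelta_self_of_two_le n w hi2]
    linarith [hmax i hi]

/-- If `w 1 ≤ (∑ w k) / 2`, the Suwa–Todo flow is rejection-free: `v i i = 0` for all `i`. -/
theorem suwa_todo_rejection_free (n : ℕ) (hn : 2 ≤ n) (w : ℕ → ℝ)
    (hw : ∀ k ∈ Finset.Icc 1 n, 0 < w k)
    (hmax : ∀ k ∈ Finset.Icc 1 n, w k ≤ w 1)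
    (h : w 1 ≤ (∑ k ∈ Finset.Icc 1 n, w k) / 2) :
    ∀ i ∈ Finset.Icc 1 n, stFlow n w i i = 0 :=
  suwa_todo_rejection_free_general n w hmax h
end

section
/- The transition matrix P_{ij} = v_{ij}/w_i defined by the Suwa–Todo flow on n states is irreducible: for all states a, b there exists m < 2n with (P^m)_{ab} > 0. -/
/-! The partial sums `T i = w 1 + ⋯ + w i` cut `[0, T n)` into the intervals `[T (i-1), T i)`,
one per state, and `v i j > 0` exactly when the interval of `i`, shifted by `w 1` modulo `T n`,
overlaps the interval of `j`. Because `w 1` is the largest weight, the shifted interval of `i`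
starts at or beyond `T i`: every state flows either to a later state or, wrapping around, to
state `1`, so state `1` is reached from anywhere within `n` steps. Conversely, every state
`j ≥ 2` receives flow from an earlier state, so `j` is reached from state `1` within `j - 1`
steps. -/

open Finset

theorem exists_apply_le_lt_apply_succ {α : Type*} [LinearOrder α] (f : ℕ → α) {n : ℕ} {x : α}
    (h₀ : f 0 ≤ x) (hn : x < f n) : ∃ k < n, f k ≤ x ∧ x < f (k + 1) := by
  induction n with
  | zero => exact absurd hn h₀.not_gt
  | succ n ih =>
    by_cases hx : x < f n
    · obtain ⟨k, hk, hfk⟩ := ih hx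
      exact ⟨k, by omega, hfk⟩
    · exact ⟨n, n.lt_succ_self, not_lt.1 hx, hn⟩

namespace Matrix

variable {R : Type*} [Semiring R] [PartialOrder R] [IsStrictOrderedRing R]

theorem pow_add_apply_pos {ι : Type*} [Fintype ι] [DecidableEq ι] {A : Matrix ι ι R}
    (hA : ∀ i j, 0 ≤ A i j) {k m : ℕ} {i l j : ι}
    (h₁ : 0 < (A ^ k) i l) (h₂ : 0 < (A ^ m) l j) : 0 < (A ^ (k + m)) i j := by
  rw [pow_add, mul_apply]
  exact sum_pos' (fun x _ => mul_nonneg (pow_apply_nonneg hA k i x) (pow_apply_nonneg hA m x j))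
    ⟨l, mem_univ l, mul_pos h₁ h₂⟩

variable {n : ℕ} [NeZero n] {A : Matrix (Fin n) (Fin n) R}

theorem exists_pow_apply_zero_pos (hA : ∀ i j, 0 ≤ A i j)
    (hfwd : ∀ a, 0 < A a 0 ∨ ∃ b, a < b ∧ 0 < A a b) (a : Fin n) :
    ∃ m ≤ n - a, 0 < (A ^ m) a 0 := by
  induction a using WellFoundedGT.induction with
  | _ a ih =>
  rcases hfwd a with h | ⟨b, hab, hb⟩
  · exact ⟨1, by omega, by rwa [pow_one]⟩
  · obtain ⟨m, hm, hpos⟩ := ih b hab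
    exact ⟨1 + m, by omega, pow_add_apply_pos hA (by rwa [pow_one]) hpos⟩

theorem exists_pow_zero_apply_pos (hA : ∀ i j, 0 ≤ A i j)
    (hbwd : ∀ b, b ≠ 0 → ∃ a < b, 0 < A a b) (b : Fin n) :
    ∃ m ≤ (b : ℕ), 0 < (A ^ m) 0 b := by
  induction b using WellFoundedLT.induction with
  | _ b ih =>
  rcases eq_or_ne b 0 with rfl | hb
  · exact ⟨0, le_rfl, by simp⟩
  · obtain ⟨a, hab, ha⟩ := hbwd b hb
    obtain ⟨m, hm, hpos⟩ := ih a hab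
    exact ⟨m + 1, by omega, pow_add_apply_pos hA hpos (by rwa [pow_one])⟩

theorem exists_pow_apply_pos_lt_two_mul (hA : ∀ i j, 0 ≤ A i j)
    (hfwd : ∀ a, 0 < A a 0 ∨ ∃ b, a < b ∧ 0 < A a b)
    (hbwd : ∀ b, b ≠ 0 → ∃ a < b, 0 < A a b) (a b : Fin n) :
    ∃ m < 2 * n, 0 < (A ^ m) a b := by
  obtain ⟨k, hk, hak⟩ := exists_pow_apply_zero_pos hA hfwd a
  obtain ⟨m, hm, hbm⟩ := exists_pow_zero_apply_pos hA hbwd b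
  exact ⟨k + m, by omega, pow_add_apply_pos hA hak hbm⟩

end Matrix

def stPartialSum (w : ℕ → ℝ) (i : ℕ) : ℝ :=
  ∑ k ∈ Icc 1 i, w k

section SuwaTodo

variable {n : ℕ} {w : ℕ → ℝ}

@[simp]
lemma stPartialSum_zero : stPartialSum w 0 = 0 := by
  simp [stPartialSum]

lemma stPartialSum_succ (i : ℕ) : stPartialSum w (i + 1) = stPartialSum w i + w (i + 1) :=
  sum_Icc_succ_top (by omega) w

lemma stPartialSum_one : stPartialSum w 1 = w 1 := by
  simp [stPartialSum]

lemma stPartialSum_strictMonoOn (hw : ∀ k ∈ Icc 1 n, 0 < w k) :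
    StrictMonoOn (stPartialSum w) (Set.Iic n) :=
  strictMonoOn_Iic_of_lt_succ fun i hi => by
    rw [Order.succ_eq_add_one, stPartialSum_succ]
    linarith [hw (i + 1) (mem_Icc.2 ⟨by omega, hi⟩)]

lemma stS_of_ne_zero {i : ℕ} (hi : i ≠ 0) : stS n w i = stPartialSum w i := by
  simp [stS, hi, stPartialSum]

lemma stS_zero : stS n w 0 = stPartialSum w n := by
  simp [stS, stPartialSum]

lemma stFlow_nonneg (i j : ℕ) : 0 ≤ stFlow n w i j :=
  le_max_left _ _

lemma stFlow_pos {i j : ℕ} (hi : 0 < w i) (hj : 0 < w j) (h₀ : 0 < stDelta n w i j)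
    (h₁ : stDelta n w i j < w i + w j) : 0 < stFlow n w i j :=
  lt_max_of_lt_right (lt_min h₀ (lt_min (by linarith) (lt_min hi hj)))

lemma stFlow_succ_succ_pos {a b : ℕ} (hb : b ≠ 0) (ha : 0 < w (a + 1)) (hb' : 0 < w (b + 1))
    (h₀ : stPartialSum w b < stPartialSum w (a + 1) + w 1)
    (h₁ : stPartialSum w a + w 1 < stPartialSum w (b + 1)) :
    0 < stFlow n w (a + 1) (b + 1) := by
  have hΔ : stDelta n w (a + 1) (b + 1) = stPartialSum w (a + 1) - stPartialSum w b + w 1 := by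
    rw [stDelta, Nat.add_sub_cancel, stS_of_ne_zero a.succ_ne_zero, stS_of_ne_zero hb]
  refine stFlow_pos ha hb' ?_ ?_ <;> rw [hΔ] <;>
    linarith [stPartialSum_succ (w := w) a, stPartialSum_succ (w := w) b]

lemma stFlow_succ_one_pos {a : ℕ} (ha : 0 < w (a + 1)) (hw1 : 0 < w 1)
    (h₀ : stPartialSum w n < stPartialSum w (a + 1) + w 1)
    (h₁ : stPartialSum w a < stPartialSum w n) :
    0 < stFlow n w (a + 1) 1 := by
  have hΔ : stDelta n w (a + 1) 1 = stPartialSum w (a + 1) - stPartialSum w n + w 1 := by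
    rw [stDelta, Nat.sub_self, stS_of_ne_zero a.succ_ne_zero, stS_zero]
  refine stFlow_pos ha hw1 ?_ ?_ <;> rw [hΔ] <;> linarith [stPartialSum_succ (w := w) a]

lemma stFlow_forward (hw : ∀ k ∈ Icc 1 n, 0 < w k) (hmax : ∀ k ∈ Icc 1 n, w k ≤ w 1)
    {a : ℕ} (ha : a < n) :
    0 < stFlow n w (a + 1) 1 ∨ ∃ b, a < b ∧ b < n ∧ 0 < stFlow n w (a + 1) (b + 1) := by
  have hT := stPartialSum_strictMonoOn hw
  have hw1 : 0 < w 1 := hw 1 (mem_Icc.2 ⟨le_rfl, by omega⟩)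
  have hwa : 0 < w (a + 1) := hw (a + 1) (mem_Icc.2 ⟨by omega, ha⟩)
  have hTa : stPartialSum w (a + 1) ≤ stPartialSum w a + w 1 := by
    rw [stPartialSum_succ]
    linarith [hmax (a + 1) (mem_Icc.2 ⟨by omega, ha⟩)]
  by_cases hc : stPartialSum w a + w 1 < stPartialSum w n
  · have hT₀ : stPartialSum w 0 ≤ stPartialSum w a + w 1 := by
      linarith [hT.monotoneOn (Set.mem_Iic.2 (Nat.zero_le n)) (Set.mem_Iic.2 ha.le) a.zero_le]
    obtain ⟨b, hbn, hb₀, hb₁⟩ := exists_apply_le_lt_apply_succ _ hT₀ hc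
    have hab : a < b := by
      by_contra! hba
      linarith [hT.monotoneOn (Set.mem_Iic.2 (by omega : b + 1 ≤ n)) (Set.mem_Iic.2 ha)
        (by omega : b + 1 ≤ a + 1)]
    have hTa' := hT (Set.mem_Iic.2 ha.le) (Set.mem_Iic.2 ha) a.lt_succ_self
    refine .inr ⟨b, hab, hbn, stFlow_succ_succ_pos (by omega) hwa ?_ (by linarith) hb₁⟩
    exact hw (b + 1) (mem_Icc.2 ⟨by omega, hbn⟩)
  · refine .inl (stFlow_succ_one_pos hwa hw1 ?_ (hT (Set.mem_Iic.2 ha.le) (Set.mem_Iic.2 le_rfl) ha))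
    linarith [hT (Set.mem_Iic.2 ha.le) (Set.mem_Iic.2 ha) a.lt_succ_self]

lemma stFlow_backward (hw : ∀ k ∈ Icc 1 n, 0 < w k) {b : ℕ} (hb : b ≠ 0) (hbn : b < n) :
    ∃ a < b, 0 < stFlow n w (a + 1) (b + 1) := by
  have hT := stPartialSum_strictMonoOn hw
  have hw1 : 0 < w 1 := hw 1 (mem_Icc.2 ⟨le_rfl, by omega⟩)
  have hwb : 0 < w (b + 1) := hw (b + 1) (mem_Icc.2 ⟨by omega, hbn⟩)
  have hTb := hT (Set.mem_Iic.2 hbn.le) (Set.mem_Iic.2 hbn) b.lt_succ_self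
  by_cases hc : stPartialSum w b < w 1
  · refine ⟨0, by omega, stFlow_succ_succ_pos hb hw1 hwb ?_ ?_⟩
    · linarith [stPartialSum_one (w := w)]
    · have := hT (Set.mem_Iic.2 (by omega : 1 ≤ n)) (Set.mem_Iic.2 hbn) (by omega : 1 < b + 1)
      linarith [stPartialSum_one (w := w), stPartialSum_zero (w := w)]
  · have hTbn := hT.monotoneOn (Set.mem_Iic.2 hbn.le) (Set.mem_Iic.2 le_rfl) hbn.le
    obtain ⟨a, han, ha₀, ha₁⟩ := exists_apply_le_lt_apply_succ (stPartialSum w)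
      (x := stPartialSum w b - w 1) (by simp only [stPartialSum_zero]; linarith) (by linarith)
    have hab : a < b := by
      by_contra! hba
      linarith [hT.monotoneOn (Set.mem_Iic.2 hbn.le) (Set.mem_Iic.2 han.le) hba]
    exact ⟨a, hab, stFlow_succ_succ_pos hb (hw (a + 1) (mem_Icc.2 ⟨by omega, by omega⟩)) hwb
      (by linarith) (by linarith)⟩

end SuwaTodo

theorem suwa_todo_irreducible_general (n : ℕ) (w : ℕ → ℝ)
    (hw : ∀ k ∈ Finset.Icc 1 n, 0 < w k)
    (hmax : ∀ k ∈ Finset.Icc 1 n, w k ≤ w 1)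
    (P : Matrix (Fin n) (Fin n) ℝ)
    (hP : ∀ i j : Fin n, P i j = stFlow n w (i.val + 1) (j.val + 1) / w (i.val + 1)) :
    ∀ a b : Fin n, ∃ m : ℕ, m < 2 * n ∧ 0 < (P ^ m) a b := by
  intro a b
  have : NeZero n := ⟨a.pos.ne'⟩
  have hwi (i : Fin n) : 0 < w (i + 1) := hw _ (mem_Icc.2 ⟨by omega, i.isLt⟩)
  have hP_nonneg (i j : Fin n) : 0 ≤ P i j :=
    hP i j ▸ div_nonneg (stFlow_nonneg _ _) (hwi i).le
  have hP_pos {i j : Fin n} (h : 0 < stFlow n w (i + 1) (j + 1)) : 0 < P i j :=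
    hP i j ▸ div_pos h (hwi i)
  refine P.exists_pow_apply_pos_lt_two_mul hP_nonneg (fun i => ?_) (fun j hj => ?_) a b
  · rcases stFlow_forward hw hmax i.isLt with h | ⟨k, hik, hkn, hk⟩
    · exact .inl (hP_pos h)
    · exact .inr ⟨⟨k, hkn⟩, hik, hP_pos hk⟩
  · obtain ⟨k, hkj, hk⟩ := stFlow_backward hw (Fin.val_ne_zero_iff.2 hj) j.isLt
    exact ⟨⟨k, by omega⟩, hkj, hP_pos hk⟩

/-- The transition matrix `P i j = v i j / w i` defined by the Suwa–Todo flow is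
irreducible: any state can be reached from any other in fewer than `2 n` steps. -/
theorem suwa_todo_irreducible (n : ℕ) (hn : 2 ≤ n) (w : ℕ → ℝ)
    (hw : ∀ k ∈ Finset.Icc 1 n, 0 < w k)
    (hmax : ∀ k ∈ Finset.Icc 1 n, w k ≤ w 1)
    (P : Matrix (Fin n) (Fin n) ℝ)
    (hP : ∀ i j : Fin n, P i j = stFlow n w (i.val + 1) (j.val + 1) / w (i.val + 1)) :
    ∀ a b : Fin n, ∃ m : ℕ, m < 2 * n ∧ 0 < (P ^ m) a b :=
  suwa_todo_irreducible_general n w hw hmax P hP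
end
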